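/- arXiv:1302.5484 — 4 statements merged into one kernel-verified Lean document; each statement's English description precedes it below -/
import Mathlib

section
/- Suppose k01, k02, k12, k21, V and a1, a2, a3, a4, a5 are real numbers with V = a5 ≠ 0, (k02 + k12)/V = (a2 + a3)/a5, k01*k02 + k01*k12 + k02*k21 = a1*a2 + a1*a3 + a2*a4, and k01 + k02 + k12 + k21 = a1 + a2 + a3 + a4. Then k01 + k21 = a1 + a4, k02 + k12 = a2 + a3, and k12*k21 = a3*a4. -/
theorem stmt_1 (k01 k02 k12 k21 V a1 a2 a3 a4 a5 : ℝ)
    (hV : V = a5) (hV0 : V ≠ 0)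
    (h1 : (k02 + k12) / V = (a2 + a3) / a5)
    (h2 : k01 * k02 + k01 * k12 + k02 * k21 = a1 * a2 + a1 * a3 + a2 * a4)
    (h3 : k01 + k02 + k12 + k21 = a1 + a2 + a3 + a4) :
    k01 + k21 = a1 + a4 ∧ k02 + k12 = a2 + a3 ∧ k12 * k21 = a3 * a4 := by
  subst hV
  have hsum2 : k02 + k12 = a2 + a3 := (div_left_inj' hV0).mp h1
  have hsum1 : k01 + k21 = a1 + a4 := by linarith
  refine ⟨hsum1, hsum2, ?_⟩
  -- k12 * k21 = (k01 + k21) * (k02 + k12) - (k01 * k02 + k01 * k12 + k02 * k21), likewise for the a's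
  linear_combination (k01 + k21) * hsum2 + (a2 + a3) * hsum1 - h2
end

section
/- Let u, y : ℝ → ℝ be smooth functions satisfying on an interval the pair of equations V·ẏ = u + k12·x2 − (k01+k21)·V·y and ẋ2 = k21·V·y − (k02+k12)·x2 for some smooth x2, with k12 ≠ 0 and V ≠ 0. Then the pair (u, y) satisfies the monic second-order linear ODE ÿ = −(k01+k02+k12+k21)ẏ − (k01 k02 + k01 k12 + k02 k21) y + ((k02+k12)/V) u + (1/V) u̇. Conversely, if smooth (u, y) satisfy this second-order ODE, then defining x2 := (−u + (k01+k21)V y + V ẏ)/k12 gives a solution of the original system with output y. -/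
theorem stmt_5 (k01 k02 k12 k21 V : ℝ) (hk12 : k12 ≠ 0) (hV : V ≠ 0) (a b : ℝ) :
    (∀ u y x2 : ℝ → ℝ, ContDiff ℝ (⊤ : ℕ∞) u → ContDiff ℝ (⊤ : ℕ∞) y → ContDiff ℝ (⊤ : ℕ∞) x2 →
      (∀ t ∈ Set.Ioo a b,
        V * deriv y t = u t + k12 * x2 t - (k01 + k21) * V * y t) →
      (∀ t ∈ Set.Ioo a b,
        deriv x2 t = k21 * V * y t - (k02 + k12) * x2 t) →
      (∀ t ∈ Set.Ioo a b,
        deriv (deriv y) t =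
          -(k01 + k02 + k12 + k21) * deriv y t -
            (k01 * k02 + k01 * k12 + k02 * k21) * y t +
            ((k02 + k12) / V) * u t + (1 / V) * deriv u t))
    ∧
    (∀ u y : ℝ → ℝ, ContDiff ℝ (⊤ : ℕ∞) u → ContDiff ℝ (⊤ : ℕ∞) y →
      (∀ t ∈ Set.Ioo a b,
        deriv (deriv y) t =
          -(k01 + k02 + k12 + k21) * deriv y t -
            (k01 * k02 + k01 * k12 + k02 * k21) * y t +
            ((k02 + k12) / V) * u t + (1 / V) * deriv u t) →
      ∀ x2 : ℝ → ℝ,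
        (∀ t, x2 t = (-(u t) + (k01 + k21) * V * y t + V * deriv y t) / k12) →
        (∀ t ∈ Set.Ioo a b,
          V * deriv y t = u t + k12 * x2 t - (k01 + k21) * V * y t) ∧
        (∀ t ∈ Set.Ioo a b,
          deriv x2 t = k21 * V * y t - (k02 + k12) * x2 t)) := by
  constructor
  · intro u y x2 hu hy hx2 h1 h2 t ht
    have hdu : Differentiable ℝ u := hu.differentiable (by simp)
    have hdy : Differentiable ℝ y := hy.differentiable (by simp)
    have hdx2 : Differentiable ℝ x2 := hx2.differentiable (by simp)
    have hdy' : Differentiable ℝ (deriv y) :=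
      ((contDiff_infty_iff_deriv.mp (hy.of_le (by simp))).2).differentiable (by simp)
    -- differentiate equation 1 at t
    have heq : (fun t => V * deriv y t) =ᶠ[nhds t]
        (fun t => u t + k12 * x2 t - (k01 + k21) * V * y t) :=
      Filter.eventuallyEq_of_mem (isOpen_Ioo.mem_nhds ht) h1
    have hd1 : V * deriv (deriv y) t =
        deriv u t + k12 * deriv x2 t - (k01 + k21) * V * deriv y t := by
      have := heq.deriv_eq
      rw [deriv_const_mul _ (hdy' t)] at this
      rw [this]
      rw [deriv_fun_sub ((hdu t).fun_add ((hdx2 t).const_mul _)) ((hdy t).const_mul _),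
        deriv_fun_add (hdu t) ((hdx2 t).const_mul _), deriv_const_mul _ (hdx2 t),
        deriv_const_mul _ (hdy t)]
    have e1 := h1 t ht
    have e2 := h2 t ht
    rw [e2] at hd1
    -- solve: k12 * x2 t = V*deriv y t + (k01+k21)*V*y t - u t
    have hx : k12 * x2 t = V * deriv y t + (k01 + k21) * V * y t - u t := by
      linarith [e1]
    have : V * deriv (deriv y) t = deriv u t + k12 * (k21 * V * y t)
        - (k02 + k12) * (k12 * x2 t) - (k01 + k21) * V * deriv y t := by
      rw [hd1]; ring
    rw [hx] at this
    field_simp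
    linarith [this]
  · intro u y hu hy hode x2 hx2
    have hdu : Differentiable ℝ u := hu.differentiable (by simp)
    have hdy : Differentiable ℝ y := hy.differentiable (by simp)
    have hdy' : Differentiable ℝ (deriv y) :=
      ((contDiff_infty_iff_deriv.mp (hy.of_le (by simp))).2).differentiable (by simp)
    constructor
    · intro t ht
      rw [hx2 t]
      field_simp
      ring
    · intro t ht
      have hfun : x2 = fun t => (-(u t) + (k01 + k21) * V * y t + V * deriv y t) / k12 :=
        funext hx2
      have hdx2 : deriv x2 t =
          (-(deriv u t) + (k01 + k21) * V * deriv y t + V * deriv (deriv y) t) / k12 := by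
        rw [hfun]
        rw [deriv_div_const]
        rw [deriv_fun_add (((hdu t).fun_neg).fun_add ((hdy t).const_mul _)) ((hdy' t).const_mul _),
          deriv_fun_add (hdu t).fun_neg ((hdy t).const_mul _), deriv.fun_neg, deriv_const_mul _ (hdy t),
          deriv_const_mul _ (hdy' t)]
      rw [hdx2, hx2 t]
      have := hode t ht
      field_simp
      field_simp at this
      linarith [this]
end

section
/- Define c : {(k02,k12,k21,V,Vmax,Km) ∈ ℝ^6 : V > 0, Km > 0, k02 > 0, k12 > 0, k21 > 0, Vmax > 0} → ℝ^6 by c = (1/V, 1/Km, (k02+k12)/V, k02·k21, k02+k12+k21+Vmax/Km, k02·k21+(k02+k12)·Vmax/Km). Then c is injective. -/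
/-!
The coefficients are solved for the parameters one at a time: `1/V` and `1/Km` give `V` and
`Km`, then `(k02 + k12)/V` gives `k02 + k12`; the difference of the last coefficient and
`k02 k21` is `(k02 + k12) Vmax / Km`, which gives `Vmax`; the fifth coefficient then gives
`k21`, the product `k02 k21` gives `k02`, and finally `k12 = (k02 + k12) - k02`.
-/

/-- Parameters are ordered as `(k02, k12, k21, V, Vmax, Km)`. -/
def twoCompartmentCoeffs {K : Type*} [Field K] (p : Fin 6 → K) : Fin 6 → K :=
  ![1 / p 3, 1 / p 5, (p 0 + p 1) / p 3, p 0 * p 2, p 0 + p 1 + p 2 + p 4 / p 5,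
    p 0 * p 2 + (p 0 + p 1) * p 4 / p 5]

theorem twoCompartmentCoeffs_injOn {K : Type*} [Field K] :
    Set.InjOn twoCompartmentCoeffs
      {p : Fin 6 → K | p 3 ≠ 0 ∧ p 5 ≠ 0 ∧ p 0 + p 1 ≠ 0 ∧ p 2 ≠ 0} := by
  rintro p ⟨hV, hKm, hsum, hk21⟩ q - h
  have e0 : 1 / p 3 = 1 / q 3 := congrFun h 0
  have e1 : 1 / p 5 = 1 / q 5 := congrFun h 1
  have e2 : (p 0 + p 1) / p 3 = (q 0 + q 1) / q 3 := congrFun h 2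
  have e3 : p 0 * p 2 = q 0 * q 2 := congrFun h 3
  have e4 : p 0 + p 1 + p 2 + p 4 / p 5 = q 0 + q 1 + q 2 + q 4 / q 5 := congrFun h 4
  have e5 : p 0 * p 2 + (p 0 + p 1) * p 4 / p 5 = q 0 * q 2 + (q 0 + q 1) * q 4 / q 5 :=
    congrFun h 5
  have hV_eq : p 3 = q 3 := by simpa using e0
  have hKm_eq : p 5 = q 5 := by simpa using e1
  have hsum_eq : p 0 + p 1 = q 0 + q 1 := by
    rwa [← hV_eq, div_left_inj' hV] at e2
  have hVmax_eq : p 4 = q 4 := by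
    have e : (p 0 + p 1) * p 4 / p 5 = (q 0 + q 1) * q 4 / q 5 := by
      linear_combination e5 - e3
    rwa [← hsum_eq, ← hKm_eq, div_left_inj' hKm, mul_right_inj' hsum] at e
  have hk21_eq : p 2 = q 2 := by
    rw [hVmax_eq, hKm_eq] at e4
    linear_combination e4 - hsum_eq
  have hk02_eq : p 0 = q 0 := by
    rw [← hk21_eq] at e3
    exact mul_right_cancel₀ hk21 e3
  have hk12_eq : p 1 = q 1 := by linear_combination hsum_eq - hk02_eq
  funext i
  fin_cases i <;> assumption

theorem stmt_11
    (c : (Fin 6 → ℝ) → (Fin 6 → ℝ))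
    (hc : ∀ p : Fin 6 → ℝ,
      c p = ![ 1 / p 3, 1 / p 5, (p 0 + p 1) / p 3, p 0 * p 2,
               p 0 + p 1 + p 2 + p 4 / p 5,
               p 0 * p 2 + (p 0 + p 1) * p 4 / p 5 ]) :
    Set.InjOn c {p : Fin 6 → ℝ |
      0 < p 0 ∧ 0 < p 1 ∧ 0 < p 2 ∧ 0 < p 3 ∧ 0 < p 4 ∧ 0 < p 5} := by
  obtain rfl : c = twoCompartmentCoeffs := funext hc
  refine twoCompartmentCoeffs_injOn.mono ?_
  rintro p ⟨h0, h1, h2, h3, -, h5⟩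
  exact ⟨h3.ne', h5.ne', (add_pos h0 h1).ne', h2.ne'⟩
end

section
/- Let σ = k01+k02+k12+k21, π = k01·k02 + k01·k12 + k02·k21, and s = k02+k12 be given positive real numbers with σ > s, and suppose there exists at least one positive solution (k01,k02,k12,k21) of this system. Then the solution set of positive tuples (k01,k02,k12,k21) satisfying these three equations, when it contains more than one point, is infinite. -/
/-!
Eliminating `a = σ - s - d` and `b = s - c` from the three equations leaves the single relation
`c * d = κ` with `κ = (σ - s) * s - π`. Hence every positive solution lies on the curve
`t ↦ (σ - s - t, s - κ / t, κ / t, t)`, and conversely each point of this curve with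
`κ / s < t < σ - s` is a positive solution. One positive solution makes `κ` and `s` positive and
puts its last coordinate inside that open interval, so the interval is nonempty and the curve
contributes infinitely many solutions.
-/

open Set Function

def IsPositiveSolution (σ π s : ℝ) (p : ℝ × ℝ × ℝ × ℝ) : Prop :=
  0 < p.1 ∧ 0 < p.2.1 ∧ 0 < p.2.2.1 ∧ 0 < p.2.2.2 ∧
  p.1 + p.2.1 + p.2.2.1 + p.2.2.2 = σ ∧
  p.1 * p.2.1 + p.1 * p.2.2.1 + p.2.1 * p.2.2.2 = π ∧
  p.2.1 + p.2.2.1 = s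

def curveConstant (σ π s : ℝ) : ℝ := (σ - s) * s - π

noncomputable def solutionCurve (σ π s t : ℝ) : ℝ × ℝ × ℝ × ℝ :=
  (σ - s - t, s - curveConstant σ π s / t, curveConstant σ π s / t, t)

theorem solutionCurve_injective (σ π s : ℝ) : Injective (solutionCurve σ π s) :=
  fun _ _ h => congrArg (·.2.2.2) h

theorem isPositiveSolution_solutionCurve {σ π s t : ℝ} (hs : 0 < s)
    (hκ : 0 < curveConstant σ π s) (ht : t ∈ Ioo (curveConstant σ π s / s) (σ - s)) :
    IsPositiveSolution σ π s (solutionCurve σ π s t) := by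
  obtain ⟨hlo, hhi⟩ := ht
  have ht₀ : 0 < t := (div_pos hκ hs).trans hlo
  have hκt : curveConstant σ π s / t < s := by
    rw [div_lt_iff₀ hs] at hlo
    rw [div_lt_iff₀ ht₀]
    linarith
  simp only [IsPositiveSolution, solutionCurve]
  refine ⟨by linarith, by linarith, div_pos hκ ht₀, ht₀, by ring, ?_, by ring⟩
  field_simp
  simp only [curveConstant]
  ring

namespace IsPositiveSolution

variable {σ π s : ℝ} {p : ℝ × ℝ × ℝ × ℝ}

theorem mul_eq_curveConstant (h : IsPositiveSolution σ π s p) :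
    p.2.2.1 * p.2.2.2 = curveConstant σ π s := by
  obtain ⟨-, -, -, -, hσ, hπ, hs⟩ := h
  unfold curveConstant
  linear_combination -hπ + s * hσ + (p.1 + p.2.2.2 - s) * hs

theorem s_pos (h : IsPositiveSolution σ π s p) : 0 < s :=
  h.2.2.2.2.2.2 ▸ add_pos h.2.1 h.2.2.1

theorem curveConstant_pos (h : IsPositiveSolution σ π s p) : 0 < curveConstant σ π s :=
  h.mul_eq_curveConstant ▸ mul_pos h.2.2.1 h.2.2.2.1

theorem mem_Ioo (h : IsPositiveSolution σ π s p) :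
    p.2.2.2 ∈ Ioo (curveConstant σ π s / s) (σ - s) := by
  rw [← h.mul_eq_curveConstant]
  obtain ⟨ha, hb, hc, hd, hσ, -, hs⟩ := h
  constructor
  · rw [div_lt_iff₀ (hs ▸ add_pos hb hc), ← hs]
    nlinarith
  · linarith

end IsPositiveSolution

theorem stmt_16_general (σ π s : ℝ)
    (S : Set (ℝ × ℝ × ℝ × ℝ))
    (hS : S = {p : ℝ × ℝ × ℝ × ℝ |
      0 < p.1 ∧ 0 < p.2.1 ∧ 0 < p.2.2.1 ∧ 0 < p.2.2.2 ∧
      p.1 + p.2.1 + p.2.2.1 + p.2.2.2 = σ ∧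
      p.1 * p.2.1 + p.1 * p.2.2.1 + p.2.1 * p.2.2.2 = π ∧
      p.2.1 + p.2.2.1 = s})
    (hne : S.Nonempty) :
    S.Infinite := by
  subst hS
  obtain ⟨p, hp⟩ := hne
  change IsPositiveSolution σ π s p at hp
  have hcurve : solutionCurve σ π s '' Ioo (curveConstant σ π s / s) (σ - s) ⊆
      {q | IsPositiveSolution σ π s q} :=
    image_subset_iff.2 fun _ => isPositiveSolution_solutionCurve hp.s_pos hp.curveConstant_pos
  exact ((Ioo_infinite (nonempty_Ioo.1 ⟨_, hp.mem_Ioo⟩)).image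
    (solutionCurve_injective σ π s).injOn).mono hcurve

theorem stmt_16 (σ π s : ℝ) (hσ : 0 < σ) (hπ : 0 < π) (hs : 0 < s) (hσs : s < σ)
    (S : Set (ℝ × ℝ × ℝ × ℝ))
    (hS : S = {p : ℝ × ℝ × ℝ × ℝ |
      0 < p.1 ∧ 0 < p.2.1 ∧ 0 < p.2.2.1 ∧ 0 < p.2.2.2 ∧
      p.1 + p.2.1 + p.2.2.1 + p.2.2.2 = σ ∧
      p.1 * p.2.1 + p.1 * p.2.2.1 + p.2.1 * p.2.2.2 = π ∧
      p.2.1 + p.2.2.1 = s})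
    (hne : S.Nonempty)
    (htwo : ∃ p ∈ S, ∃ q ∈ S, p ≠ q) :
    S.Infinite :=
  stmt_16_general σ π s S hS hne
end
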